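/- Let g_1, …, g_M ∈ ℂ^N and h_1, …, h_M ∈ ℂ^N. The collections {T_i g_s : 1 ≤ i ≤ N, 1 ≤ s ≤ M} and {T_i h_s : 1 ≤ i ≤ N, 1 ≤ s ≤ M} are dual frames for ℂ^N, i.e. ⟨f, f₁⟩ = Σ_{i=1}^N Σ_{s=1}^M ⟨f, T_i g_s⟩ · ⟨T_i h_s, f₁⟩ for all f, f₁ ∈ ℂ^N, if and only if Σ_{s=1}^M conj(ĝ_s(l)) · ĥ_s(l) = 1/N for all 1 ≤ l ≤ N. -/

import Mathlib

open scoped ComplexConjugate BigOperators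

/-- Graph Fourier transform: `(gft χ f) l = ⟨f, χ_l⟩ = ∑ n, f n * conj (χ l n)`. -/
noncomputable def gft {N : ℕ} (χ : Fin N → EuclideanSpace ℂ (Fin N))
    (f : EuclideanSpace ℂ (Fin N)) : EuclideanSpace ℂ (Fin N) :=
  WithLp.toLp 2 fun l => ∑ n, f n * conj (χ l n)

/-- Generalized translation: `(T_i f)(n) = √N · ∑ l, f̂(l) · conj (χ l i) · χ l n`. -/
noncomputable def gtrans {N : ℕ} (χ : Fin N → EuclideanSpace ℂ (Fin N))
    (i : Fin N) (f : EuclideanSpace ℂ (Fin N)) : EuclideanSpace ℂ (Fin N) :=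
  WithLp.toLp 2 fun n => (Real.sqrt N : ℂ) * ∑ l, gft χ f l * conj (χ l i) * χ l n

/-! Both pairings of a test vector with a translate are expansions in the basis `χ`:
`⟨f, T_i u⟩ = √N ∑_l conj (û l) f̂ l χ_l(i)` and
`⟨T_i v, f₁⟩ = √N ∑_l v̂ l conj (f̂₁ l) conj (χ_l(i))`.
Summing their product over `i`, orthonormality of the `χ_l` collapses the double sum over `l`:
`∑_{i,s} ⟨f, T_i g_s⟩ ⟨T_i h_s, f₁⟩ = ∑_l f̂ l conj (f̂₁ l) · N ∑_s conj (ĝ_s l) ĥ_s l`,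
so the frame operator is diagonal with this multiplier. Since `N` orthonormal vectors of `ℂ^N`
form an orthonormal basis, Parseval gives `⟨f, f₁⟩ = ∑_l f̂ l conj (f̂₁ l)`, and the two agree
for all `f, f₁` iff the multiplier is `1` at every `l` (test `f = f₁ = χ_l`). -/

open scoped InnerProductSpace

theorem EuclideanSpace.sum_mul_conj_eq_inner {κ : Type*} [Fintype κ]
    (u v : EuclideanSpace ℂ κ) :
    ∑ n, v n * conj (u n) = ⟪u, v⟫_ℂ := rfl

theorem Orthonormal.exists_orthonormalBasis_coe_eq {𝕜 ι E : Type*} [RCLike 𝕜] [Fintype ι]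
    [NormedAddCommGroup E] [InnerProductSpace 𝕜 E] [FiniteDimensional 𝕜 E] {v : ι → E}
    (hv : Orthonormal 𝕜 v) (hcard : Fintype.card ι = Module.finrank 𝕜 E) :
    ∃ b : OrthonormalBasis ι 𝕜 E, ⇑b = v :=
  ⟨.mk hv (hv.linearIndependent.span_eq_top_of_card_eq_finrank' hcard).ge,
    OrthonormalBasis.coe_mk _ _⟩

theorem Orthonormal.sum_mul_sum_mul_conj {ι κ : Type*} [Fintype ι] [Fintype κ]
    {χ : ι → EuclideanSpace ℂ κ} (hχ : Orthonormal ℂ χ) (a b : ι → ℂ) :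
    ∑ i, (∑ l, a l * χ l i) * ∑ l, b l * conj (χ l i) = ∑ l, a l * b l := by
  have := hχ.inner_sum (fun l => conj (b l)) a Finset.univ
  simp only [Complex.conj_conj] at this
  rw [← EuclideanSpace.sum_mul_conj_eq_inner] at this
  simpa [WithLp.ofLp_sum, mul_comm] using this

theorem OrthonormalBasis.forall_inner_eq_sum_repr_mul_iff {ι E : Type*} [Fintype ι]
    [NormedAddCommGroup E] [InnerProductSpace ℂ E] (b : OrthonormalBasis ι ℂ E) (c : ι → ℂ) :
    (∀ x y, ⟪x, y⟫_ℂ = ∑ l, conj (b.repr x l) * b.repr y l * c l) ↔ ∀ l, c l = 1 := by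
  classical
  constructor
  · intro hc l
    simpa [b.repr_self, PiLp.single_apply, b.orthonormal.1 l] using (hc (b l) (b l)).symm
  · intro hc x y
    simp [hc, ← b.sum_inner_mul_inner x y, b.repr_apply_apply]

section GraphTranslation

variable {N : ℕ}

theorem gft_eq_repr (b : OrthonormalBasis (Fin N) ℂ (EuclideanSpace ℂ (Fin N)))
    (f : EuclideanSpace ℂ (Fin N)) : gft b f = b.repr f := by
  ext l
  rw [b.repr_apply_apply]
  rfl

variable {χ : Fin N → EuclideanSpace ℂ (Fin N)}

theorem gft_apply (f : EuclideanSpace ℂ (Fin N)) (l : Fin N) : gft χ f l = ⟪χ l, f⟫_ℂ := rfl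

theorem gtrans_eq_sum (i : Fin N) (u : EuclideanSpace ℂ (Fin N)) :
    gtrans χ i u = (Real.sqrt N : ℂ) • ∑ l, (gft χ u l * conj (χ l i)) • χ l := by
  ext n
  simp [gtrans, Finset.mul_sum]

theorem inner_gtrans_left (i : Fin N) (u f : EuclideanSpace ℂ (Fin N)) :
    ⟪gtrans χ i u, f⟫_ℂ = Real.sqrt N * ∑ l, conj (gft χ u l) * gft χ f l * χ l i := by
  simp only [gtrans_eq_sum, inner_smul_left, sum_inner, map_mul, Complex.conj_ofReal,
    Complex.conj_conj, gft_apply, Finset.mul_sum]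
  exact Finset.sum_congr rfl fun l _ => by ring

theorem inner_gtrans_right (i : Fin N) (u f : EuclideanSpace ℂ (Fin N)) :
    ⟪f, gtrans χ i u⟫_ℂ =
      Real.sqrt N * ∑ l, gft χ u l * conj (gft χ f l) * conj (χ l i) := by
  rw [← inner_conj_symm, inner_gtrans_left]
  simp

theorem sum_inner_gtrans_mul_inner_gtrans (hχ : Orthonormal ℂ χ)
    (u v f f₁ : EuclideanSpace ℂ (Fin N)) :
    ∑ i, ⟪gtrans χ i u, f⟫_ℂ * ⟪f₁, gtrans χ i v⟫_ℂ =
      N * ∑ l, conj (gft χ f₁ l) * gft χ f l * (conj (gft χ u l) * gft χ v l) := by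
  have hsqrt : (Real.sqrt N : ℂ) * Real.sqrt N = N := by
    exact_mod_cast Real.mul_self_sqrt (Nat.cast_nonneg N)
  simp_rw [inner_gtrans_left, inner_gtrans_right, mul_mul_mul_comm _ (∑ l, _),
    ← Finset.mul_sum, hχ.sum_mul_sum_mul_conj, hsqrt]
  congr 1
  exact Finset.sum_congr rfl fun l _ => by ring

theorem sum_sum_inner_gtrans_mul_inner_gtrans {M : ℕ} (hχ : Orthonormal ℂ χ)
    (g h : Fin M → EuclideanSpace ℂ (Fin N)) (f f₁ : EuclideanSpace ℂ (Fin N)) :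
    ∑ i, ∑ s, ⟪gtrans χ i (g s), f⟫_ℂ * ⟪f₁, gtrans χ i (h s)⟫_ℂ =
      ∑ l, conj (gft χ f₁ l) * gft χ f l *
        (N * ∑ s, conj (gft χ (g s) l) * gft χ (h s) l) := by
  rw [Finset.sum_comm]
  simp_rw [sum_inner_gtrans_mul_inner_gtrans hχ, Finset.mul_sum]
  rw [Finset.sum_comm]
  exact Finset.sum_congr rfl fun l _ => Finset.sum_congr rfl fun s _ => by ring

end GraphTranslation

theorem translates_multi_dual_frames_iff_general {N M : ℕ}
    (χ : Fin N → EuclideanSpace ℂ (Fin N)) (hχ : Orthonormal ℂ χ)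
    (g h : Fin M → EuclideanSpace ℂ (Fin N)) :
    (∀ f f₁ : EuclideanSpace ℂ (Fin N),
        (∑ n, f n * conj (f₁ n)) =
          ∑ i : Fin N, ∑ s : Fin M,
            (∑ n, f n * conj (gtrans χ i (g s) n)) *
              (∑ n, gtrans χ i (h s) n * conj (f₁ n))) ↔
    (∀ l : Fin N, (∑ s : Fin M, conj (gft χ (g s) l) * gft χ (h s) l) = 1 / N) := by
  obtain ⟨b, rfl⟩ := hχ.exists_orthonormalBasis_coe_eq (by simp)
  -- `⟪x, y⟫_ℂ` is conjugate-linear in `x`, so the paper's `⟨f, f₁⟩` is `⟪f₁, f⟫_ℂ`.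
  simp_rw [EuclideanSpace.sum_mul_conj_eq_inner, sum_sum_inner_gtrans_mul_inner_gtrans hχ,
    gft_eq_repr]
  rw [forall_comm]
  rw [b.forall_inner_eq_sum_repr_mul_iff]
  exact forall_congr' fun l => by
    rw [eq_div_iff (Nat.cast_ne_zero.2 l.pos.ne'), mul_comm]

/-- `{T_i g_s}` and `{T_i h_s}` are dual frames for `ℂ^N` iff
`∑_s conj(ĝ_s(l))·ĥ_s(l) = 1/N` for all `l`. -/
theorem translates_multi_dual_frames_iff {N M : ℕ} (hN : 0 < N)
    (χ : Fin N → EuclideanSpace ℂ (Fin N)) (hχ : Orthonormal ℂ χ)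
    (hspan : Submodule.span ℂ (Set.range χ) = ⊤)
    (g h : Fin M → EuclideanSpace ℂ (Fin N)) :
    (∀ f f₁ : EuclideanSpace ℂ (Fin N),
        (∑ n, f n * conj (f₁ n)) =
          ∑ i : Fin N, ∑ s : Fin M,
            (∑ n, f n * conj (gtrans χ i (g s) n)) *
              (∑ n, gtrans χ i (h s) n * conj (f₁ n))) ↔
    (∀ l : Fin N, (∑ s : Fin M, conj (gft χ (g s) l) * gft χ (h s) l) = 1 / N) :=
  translates_multi_dual_frames_iff_general χ hχ g h
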